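/- arXiv:0802.1946 — 3 statements merged into one kernel-verified Lean document; each statement's English description precedes it below -/
import Mathlib

section
/- Let C be a monoidal category. Suppose h₁, h₂ : A₁ ⇉ A₂ is a reflexive pair with coequalizer h : A₂ → A₃ and k₁, k₂ : B₁ ⇉ B₂ is a reflexive pair with coequalizer k : B₂ → B₃, and suppose both coequalizers are preserved by tensoring with any object on either side. Then h₁ ⊗ k₁, h₂ ⊗ k₂ : A₁ ⊗ B₁ ⇉ A₂ ⊗ B₂ is a reflexive pair and h ⊗ k : A₂ ⊗ B₂ → A₃ ⊗ B₃ is its coequalizer. -/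
open CategoryTheory CategoryTheory.Limits CategoryTheory.MonoidalCategory

universe v u

/-!
Write `h ⊗ₘ k = h ▷ B₂ ≫ A₃ ◁ k`. If `t` coequalizes `h₁ ⊗ₘ k₁` and `h₂ ⊗ₘ k₂`, precomposing
with `A₁ ◁ s` for a common section `s` of `k₁, k₂` shows that `t` coequalizes `h₁ ▷ B₂, h₂ ▷ B₂`,
so `t = h ▷ B₂ ≫ d₁`. Symmetrically `t` coequalizes `A₂ ◁ k₁, A₂ ◁ k₂`; by the interchange law
and since `h ▷ B₁` is epi, `d₁` then coequalizes `A₃ ◁ k₁, A₃ ◁ k₂`, so it factors through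
`A₃ ◁ k`.
-/

instance CategoryTheory.Limits.IsReflexivePair.tensorHom {C : Type u} [Category.{v} C]
    [MonoidalCategory C] {A₁ A₂ B₁ B₂ : C} (f g : A₁ ⟶ A₂) (f' g' : B₁ ⟶ B₂)
    [IsReflexivePair f g] [IsReflexivePair f' g'] : IsReflexivePair (f ⊗ₘ f') (g ⊗ₘ g') :=
  IsReflexivePair.mk' (commonSection f g ⊗ₘ commonSection f' g')
    (by simp [tensorHom_comp_tensorHom]) (by simp [tensorHom_comp_tensorHom])

namespace CategoryTheory.MonoidalCategory

variable {C : Type u} [Category.{v} C] [MonoidalCategory C]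

lemma whiskerRight_eq_whiskerLeft_comp_tensorHom {A₁ A₂ B₁ B₂ : C} (f : A₁ ⟶ A₂)
    {k : B₁ ⟶ B₂} {s : B₂ ⟶ B₁} (hs : s ≫ k = 𝟙 B₂) : f ▷ B₂ = A₁ ◁ s ≫ (f ⊗ₘ k) := by
  rw [whiskerLeft_comp_tensorHom, hs, tensorHom_id]

lemma whiskerLeft_eq_whiskerRight_comp_tensorHom {A₁ A₂ B₁ B₂ : C} {h : A₁ ⟶ A₂}
    {s : A₂ ⟶ A₁} (hs : s ≫ h = 𝟙 A₂) (g : B₁ ⟶ B₂) : A₂ ◁ g = s ▷ B₁ ≫ (h ⊗ₘ g) := by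
  rw [whiskerRight_comp_tensorHom, hs, id_tensorHom]

section Coequalizing

variable {A₁ A₂ B₁ B₂ T : C} {h₁ h₂ : A₁ ⟶ A₂} {k₁ k₂ : B₁ ⟶ B₂} {t : A₂ ⊗ B₂ ⟶ T}

lemma whiskerRight_comp_eq_of_tensorHom_comp_eq [IsReflexivePair k₁ k₂]
    (ht : (h₁ ⊗ₘ k₁) ≫ t = (h₂ ⊗ₘ k₂) ≫ t) : h₁ ▷ B₂ ≫ t = h₂ ▷ B₂ ≫ t := by
  rw [whiskerRight_eq_whiskerLeft_comp_tensorHom h₁ (section_comp_left k₁ k₂),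
    whiskerRight_eq_whiskerLeft_comp_tensorHom h₂ (section_comp_right k₁ k₂),
    Category.assoc, Category.assoc, ht]

lemma whiskerLeft_comp_eq_of_tensorHom_comp_eq [IsReflexivePair h₁ h₂]
    (ht : (h₁ ⊗ₘ k₁) ≫ t = (h₂ ⊗ₘ k₂) ≫ t) : A₂ ◁ k₁ ≫ t = A₂ ◁ k₂ ≫ t := by
  rw [whiskerLeft_eq_whiskerRight_comp_tensorHom (section_comp_left h₁ h₂) k₁,
    whiskerLeft_eq_whiskerRight_comp_tensorHom (section_comp_right h₁ h₂) k₂,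
    Category.assoc, Category.assoc, ht]

end Coequalizing

section Whiskering

variable {X Y Z : C} {f g : X ⟶ Y} {π : Y ⟶ Z} {w : f ≫ π = g ≫ π}

noncomputable def isColimitCoforkWhiskerRight (hπ : IsColimit (Cofork.ofπ π w)) (W : C)
    [PreservesColimit (parallelPair f g) (tensorRight W)] :
    IsColimit (Cofork.ofπ (π ▷ W) (by simp only [← comp_whiskerRight, w]) :
      Cofork (f ▷ W) (g ▷ W)) :=
  isColimitCoforkMapOfIsColimit (tensorRight W) w hπ

noncomputable def isColimitCoforkWhiskerLeft (hπ : IsColimit (Cofork.ofπ π w)) (W : C)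
    [PreservesColimit (parallelPair f g) (tensorLeft W)] :
    IsColimit (Cofork.ofπ (W ◁ π) (by simp only [← whiskerLeft_comp, w]) :
      Cofork (W ◁ f) (W ◁ g)) :=
  isColimitCoforkMapOfIsColimit (tensorLeft W) w hπ

end Whiskering

noncomputable def isColimitCoforkTensorHom {A₁ A₂ A₃ B₁ B₂ B₃ : C}
    {h₁ h₂ : A₁ ⟶ A₂} [IsReflexivePair h₁ h₂] {k₁ k₂ : B₁ ⟶ B₂} [IsReflexivePair k₁ k₂]
    {h : A₂ ⟶ A₃} {k : B₂ ⟶ B₃} (w : (h₁ ⊗ₘ k₁) ≫ (h ⊗ₘ k) = (h₂ ⊗ₘ k₂) ≫ (h ⊗ₘ k))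
    {wB₂ : h₁ ▷ B₂ ≫ h ▷ B₂ = h₂ ▷ B₂ ≫ h ▷ B₂} {wA₃ : A₃ ◁ k₁ ≫ A₃ ◁ k = A₃ ◁ k₂ ≫ A₃ ◁ k}
    (hB₂ : IsColimit (Cofork.ofπ (h ▷ B₂) wB₂)) [Epi (h ▷ B₁)]
    (kA₃ : IsColimit (Cofork.ofπ (A₃ ◁ k) wA₃)) :
    IsColimit (Cofork.ofπ (h ⊗ₘ k) w) :=
  Cofork.IsColimit.mk' _ fun s => by
    have hs : (h₁ ⊗ₘ k₁) ≫ s.π = (h₂ ⊗ₘ k₂) ≫ s.π := s.condition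
    obtain ⟨d₁, hd₁⟩ :=
      Cofork.IsColimit.desc' hB₂ s.π (whiskerRight_comp_eq_of_tensorHom_comp_eq hs)
    simp only [Cofork.π_ofπ] at hd₁
    have hd₁k : A₃ ◁ k₁ ≫ d₁ = A₃ ◁ k₂ ≫ d₁ := by
      rw [← cancel_epi (h ▷ B₁), ← whisker_exchange_assoc, ← whisker_exchange_assoc, hd₁,
        whiskerLeft_comp_eq_of_tensorHom_comp_eq hs]
    obtain ⟨d, hd⟩ := Cofork.IsColimit.desc' kA₃ d₁ hd₁k
    simp only [Cofork.π_ofπ] at hd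
    have hfac : (h ⊗ₘ k) ≫ d = s.π := by rw [tensorHom_def h k, Category.assoc, hd, hd₁]
    refine ⟨d, hfac, fun {m} hm => ?_⟩
    refine Cofork.IsColimit.hom_ext kA₃ (Cofork.IsColimit.hom_ext hB₂ ?_)
    simp only [Cofork.π_ofπ] at hm ⊢
    rw [← tensorHom_def_assoc, hm, hd, hd₁]

end CategoryTheory.MonoidalCategory

/-- (Part of the 3-by-3 lemma.) Given two reflexive coequalizers in a monoidal category,
both preserved by tensoring with any object on either side, their tensor product is again
a reflexive coequalizer. -/
theorem tensor_of_reflexive_coequalizers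
    {C : Type u} [Category.{v} C] [MonoidalCategory C]
    {A₁ A₂ A₃ B₁ B₂ B₃ : C}
    (h₁ h₂ : A₁ ⟶ A₂) (hrefl : IsReflexivePair h₁ h₂)
    (k₁ k₂ : B₁ ⟶ B₂) (krefl : IsReflexivePair k₁ k₂)
    (h : A₂ ⟶ A₃) (wh : h₁ ≫ h = h₂ ≫ h) (hcoeq : IsColimit (Cofork.ofπ h wh))
    (k : B₂ ⟶ B₃) (wk : k₁ ≫ k = k₂ ≫ k) (kcoeq : IsColimit (Cofork.ofπ k wk))
    (hpres : ∀ X : C, PreservesColimit (parallelPair h₁ h₂) (tensorLeft X) ∧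
      PreservesColimit (parallelPair h₁ h₂) (tensorRight X))
    (kpres : ∀ X : C, PreservesColimit (parallelPair k₁ k₂) (tensorLeft X) ∧
      PreservesColimit (parallelPair k₁ k₂) (tensorRight X)) :
    IsReflexivePair (h₁ ⊗ₘ k₁) (h₂ ⊗ₘ k₂) ∧
    Nonempty (IsColimit (Cofork.ofπ (h ⊗ₘ k)
      (show (h₁ ⊗ₘ k₁) ≫ (h ⊗ₘ k) = (h₂ ⊗ₘ k₂) ≫ (h ⊗ₘ k) by
        rw [tensorHom_comp_tensorHom, tensorHom_comp_tensorHom, wh, wk]))) := by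
  refine ⟨inferInstance, ⟨?_⟩⟩
  have := (hpres B₁).2
  have := (hpres B₂).2
  have := (kpres A₃).1
  have : Epi (h ▷ B₁) := epi_of_isColimit_cofork (isColimitCoforkWhiskerRight hcoeq B₁)
  exact isColimitCoforkTensorHom _ (isColimitCoforkWhiskerRight hcoeq B₂)
    (isColimitCoforkWhiskerLeft kcoeq A₃)
end

section
/- Let C be a monoidal category. Suppose h₁, h₂ : A₁ ⇉ A₂ is a reflexive pair with coequalizer h : A₂ → A₃ and k₁, k₂ : B₁ ⇉ B₂ is a reflexive pair with coequalizer k : B₂ → B₃, both preserved by tensoring with any object on either side. Then the square with vertices A₂ ⊗ B₂, A₃ ⊗ B₂, A₂ ⊗ B₃, A₃ ⊗ B₃, and edges h ⊗ B₂, A₂ ⊗ k, A₃ ⊗ k, h ⊗ B₃, is a pushout; that is, A₃ ⊗ B₃ is the cointersection of the quotients A₃ ⊗ B₂ and A₂ ⊗ B₃ of A₂ ⊗ B₂. -/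
open CategoryTheory CategoryTheory.Limits CategoryTheory.MonoidalCategory

universe v u

/-!
`A₃ ◁ k` is the coequalizer of `A₃ ◁ k₁` and `A₃ ◁ k₂`. A cocone `(s₁, s₂)` over the
span `A₃ ⊗ B₂ ← A₂ ⊗ B₂ → A₂ ⊗ B₃` therefore factors through `A₃ ⊗ B₃` once `s₁` coequalizes
`A₃ ◁ k₁` and `A₃ ◁ k₂`; this can be tested after precomposing with the epimorphism `h ▷ B₁`,
where, by the interchange law, it reduces to `A₂ ◁ k₁ ≫ A₂ ◁ k ≫ s₂ = A₂ ◁ k₂ ≫ A₂ ◁ k ≫ s₂`.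
-/

namespace CategoryTheory.IsPushout

variable {C : Type u} [Category.{v} C]

theorem of_isColimit_cofork_of_epi {X X' Y Y' Z P : C} {f : X ⟶ Y} {g : X ⟶ Z}
    {g' : Y ⟶ P} {f' : Z ⟶ P} (sq : f ≫ g' = g ≫ f') {u₁ u₂ : Y' ⟶ Y}
    {wu : u₁ ≫ g' = u₂ ≫ g'} (hu : IsColimit (Cofork.ofπ g' wu))
    {v₁ v₂ : X' ⟶ X} (wv : v₁ ≫ g = v₂ ≫ g) [Epi g]
    (e : X' ⟶ Y') [Epi e] (he₁ : e ≫ u₁ = v₁ ≫ f) (he₂ : e ≫ u₂ = v₂ ≫ f) :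
    IsPushout f g g' f' := by
  have coeq (s : PushoutCocone f g) : u₁ ≫ s.inl = u₂ ≫ s.inl := by
    rw [← cancel_epi e, reassoc_of% he₁, reassoc_of% he₂, s.condition, reassoc_of% wv]
  have fac (s : PushoutCocone f g) : g' ≫ Cofork.IsColimit.desc hu s.inl (coeq s) = s.inl :=
    Cofork.IsColimit.π_desc' hu s.inl (coeq s)
  have : Epi g' := epi_of_isColimit_cofork hu
  refine ⟨⟨sq⟩, ⟨PushoutCocone.IsColimit.mk sq
    (fun s => Cofork.IsColimit.desc hu s.inl (coeq s)) fac (fun s => ?_) (fun s m hm _ => ?_)⟩⟩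
  · rw [← cancel_epi g, ← reassoc_of% sq, fac, s.condition]
  · rw [← cancel_epi g', hm, fac]

end CategoryTheory.IsPushout

theorem tensor_cointersection_of_reflexive_coequalizers_general
    {C : Type u} [Category.{v} C] [MonoidalCategory C]
    {A₁ A₂ A₃ B₁ B₂ B₃ : C}
    (h₁ h₂ : A₁ ⟶ A₂)
    (k₁ k₂ : B₁ ⟶ B₂)
    (h : A₂ ⟶ A₃) (wh : h₁ ≫ h = h₂ ≫ h) (hcoeq : IsColimit (Cofork.ofπ h wh))
    (k : B₂ ⟶ B₃) (wk : k₁ ≫ k = k₂ ≫ k) (kcoeq : IsColimit (Cofork.ofπ k wk))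
    (hpres : ∀ X : C, PreservesColimit (parallelPair h₁ h₂) (tensorLeft X) ∧
      PreservesColimit (parallelPair h₁ h₂) (tensorRight X))
    (kpres : ∀ X : C, PreservesColimit (parallelPair k₁ k₂) (tensorLeft X) ∧
      PreservesColimit (parallelPair k₁ k₂) (tensorRight X)) :
    IsPushout (h ▷ B₂) (A₂ ◁ k) (A₃ ◁ k) (h ▷ B₃) := by
  have := (hpres B₁).2
  have := (kpres A₂).1
  have := (kpres A₃).1
  have : Epi (h ▷ B₁) :=
    epi_of_isColimit_cofork (isColimitCoforkMapOfIsColimit (tensorRight B₁) wh hcoeq)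
  have : Epi (A₂ ◁ k) :=
    epi_of_isColimit_cofork (isColimitCoforkMapOfIsColimit (tensorLeft A₂) wk kcoeq)
  exact IsPushout.of_isColimit_cofork_of_epi (whisker_exchange h k).symm
    (isColimitCoforkMapOfIsColimit (tensorLeft A₃) wk kcoeq)
    (by simp only [← whiskerLeft_comp, wk]) (h ▷ B₁)
    (whisker_exchange h k₁).symm (whisker_exchange h k₂).symm

/-- (Part of the 3-by-3 lemma.) Given two reflexive coequalizers in a monoidal category,
both preserved by tensoring with any object on either side, `A₃ ⊗ B₃` is the
cointersection (pushout) of the quotients `A₃ ⊗ B₂` and `A₂ ⊗ B₃` of `A₂ ⊗ B₂`. -/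
theorem tensor_cointersection_of_reflexive_coequalizers
    {C : Type u} [Category.{v} C] [MonoidalCategory C]
    {A₁ A₂ A₃ B₁ B₂ B₃ : C}
    (h₁ h₂ : A₁ ⟶ A₂) (hrefl : IsReflexivePair h₁ h₂)
    (k₁ k₂ : B₁ ⟶ B₂) (krefl : IsReflexivePair k₁ k₂)
    (h : A₂ ⟶ A₃) (wh : h₁ ≫ h = h₂ ≫ h) (hcoeq : IsColimit (Cofork.ofπ h wh))
    (k : B₂ ⟶ B₃) (wk : k₁ ≫ k = k₂ ≫ k) (kcoeq : IsColimit (Cofork.ofπ k wk))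
    (hpres : ∀ X : C, PreservesColimit (parallelPair h₁ h₂) (tensorLeft X) ∧
      PreservesColimit (parallelPair h₁ h₂) (tensorRight X))
    (kpres : ∀ X : C, PreservesColimit (parallelPair k₁ k₂) (tensorLeft X) ∧
      PreservesColimit (parallelPair k₁ k₂) (tensorRight X)) :
    IsPushout (h ▷ B₂) (A₂ ◁ k) (A₃ ◁ k) (h ▷ B₃) :=
  tensor_cointersection_of_reflexive_coequalizers_general h₁ h₂ k₁ k₂ h wh hcoeq k wk kcoeq hpres
    kpres
end

section
/- Let A₁₁, A₁₂, A₂₁, A₂₂ be objects of a category with morphisms f₁, f₂ : A₁₁ → A₁₂, f'₁, f'₂ : A₁₁ → A₂₁, g₁, g₂ : A₂₁ → A₂₂, g'₁, g'₂ : A₁₂ → A₂₂ satisfying gᵢ ∘ f'ⱼ = g'ⱼ ∘ fᵢ for all i, j ∈ {1,2}, and suppose there exist s : A₁₂ → A₁₁ with f₁ ∘ s = f₂ ∘ s = id and s' : A₂₁ → A₁₁ with f'₁ ∘ s' = f'₂ ∘ s' = id. Then the coequalizer of the pair (g'₁ ∘ f₁, g'₂ ∘ f₂) is the cointersection (pushout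 over A₂₂) of the coequalizer of (g₁, g₂) and the coequalizer of (g'₁, g'₂), whenever these colimits exist. -/
open CategoryTheory CategoryTheory.Limits

universe v u

/-!
A morphism out of `A₂₂` coequalizes the diagonal pair `(f₁ ≫ g'₁, f₂ ≫ g'₂)` exactly when it
coequalizes both `(g₁, g₂)` and `(g'₁, g'₂)`: one direction follows from the commutativity of the
square, the other by precomposing with the common sections `s'` of `f'₁, f'₂` and `s` of
`f₁, f₂`. Hence the coequalizer of the diagonal pair has the universal property of the pushout of
the two coequalizers.
-/

section

variable {C : Type u} [Category.{v} C]

lemma eq_of_comp_eq_of_common_section {X Y Z : C} {f₁ f₂ : X ⟶ Y} {s : Y ⟶ X}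
    (hs₁ : s ≫ f₁ = 𝟙 Y) (hs₂ : s ≫ f₂ = 𝟙 Y) {h k : Y ⟶ Z} (e : f₁ ≫ h = f₂ ≫ k) : h = k := by
  calc h = (s ≫ f₁) ≫ h := by rw [hs₁, Category.id_comp]
    _ = (s ≫ f₂) ≫ k := by rw [Category.assoc, e, Category.assoc]
    _ = k := by rw [hs₂, Category.id_comp]

noncomputable def isColimitCoforkCompOfIsPushout {X Y Z Z' Q Q' D : C} {a b : X ⟶ Y}
    {u v : Z ⟶ Y} {u' v' : Z' ⟶ Y}
    {c : Y ⟶ Q} {wc : u ≫ c = v ≫ c} (hc : IsColimit (Cofork.ofπ c wc))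
    {c' : Y ⟶ Q'} {wc' : u' ≫ c' = v' ≫ c'} (hc' : IsColimit (Cofork.ofπ c' wc'))
    {p : Q ⟶ D} {p' : Q' ⟶ D} (hpo : IsPushout c c' p p')
    (huv : ∀ {B : C} (x : Y ⟶ B), a ≫ x = b ≫ x → u ≫ x = v ≫ x)
    (huv' : ∀ {B : C} (x : Y ⟶ B), a ≫ x = b ≫ x → u' ≫ x = v' ≫ x)
    (w : a ≫ c ≫ p = b ≫ c ≫ p) :
    IsColimit (Cofork.ofπ (c ≫ p) w) :=
  have : Epi c := Cofork.IsColimit.epi hc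
  have : Epi c' := Cofork.IsColimit.epi hc'
  let d (t : Cofork a b) := Cofork.IsColimit.desc hc t.π (huv t.π t.condition)
  let d' (t : Cofork a b) := Cofork.IsColimit.desc hc' t.π (huv' t.π t.condition)
  have hd (t : Cofork a b) : c ≫ d t = t.π := Cofork.IsColimit.π_desc' hc _ _
  have hd' (t : Cofork a b) : c' ≫ d' t = t.π := Cofork.IsColimit.π_desc' hc' _ _
  Cofork.IsColimit.mk _ (fun t => hpo.desc (d t) (d' t) (by rw [hd, hd']))
    (fun t => by rw [Cofork.π_ofπ, Category.assoc, hpo.inl_desc, hd])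
    (fun t m hm => by
      rw [Cofork.π_ofπ, Category.assoc] at hm
      refine hpo.hom_ext ((cancel_epi c).1 ?_) ((cancel_epi c').1 ?_)
      · rw [hpo.inl_desc, hd, hm]
      · rw [hpo.inr_desc, hd', ← hm, hpo.w_assoc])

end

/-- Lack's proposition: in the situation of the displayed square of reflexive data,
the coequalizer of `(g'₁ ∘ f₁, g'₂ ∘ f₂)` is the cointersection (pushout) of the
coequalizer of `(g₁, g₂)` and the coequalizer of `(g'₁, g'₂)`: given coequalizers
`c`, `c'` of these two pairs and a pushout `D` of `c` and `c'`, the induced map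
`c ≫ p : A₂₂ ⟶ D` is a coequalizer of `(g'₁ ∘ f₁, g'₂ ∘ f₂)`. -/
theorem coequalizer_diagonal_is_cointersection
    {C : Type u} [Category.{v} C]
    {A₁₁ A₁₂ A₂₁ A₂₂ : C}
    (f₁ f₂ : A₁₁ ⟶ A₁₂) (f'₁ f'₂ : A₁₁ ⟶ A₂₁)
    (g₁ g₂ : A₂₁ ⟶ A₂₂) (g'₁ g'₂ : A₁₂ ⟶ A₂₂)
    (w₁₁ : f'₁ ≫ g₁ = f₁ ≫ g'₁) (w₁₂ : f'₂ ≫ g₁ = f₁ ≫ g'₂)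
    (w₂₂ : f'₂ ≫ g₂ = f₂ ≫ g'₂)
    (s : A₁₂ ⟶ A₁₁) (hs₁ : s ≫ f₁ = 𝟙 A₁₂) (hs₂ : s ≫ f₂ = 𝟙 A₁₂)
    (s' : A₂₁ ⟶ A₁₁) (hs'₁ : s' ≫ f'₁ = 𝟙 A₂₁) (hs'₂ : s' ≫ f'₂ = 𝟙 A₂₁)
    {Q Q' D : C}
    (c : A₂₂ ⟶ Q) (wc : g₁ ≫ c = g₂ ≫ c) (hc : IsColimit (Cofork.ofπ c wc))
    (c' : A₂₂ ⟶ Q') (wc' : g'₁ ≫ c' = g'₂ ≫ c') (hc' : IsColimit (Cofork.ofπ c' wc'))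
    (p : Q ⟶ D) (p' : Q' ⟶ D) (hpo : IsPushout c c' p p') :
    Nonempty (IsColimit (Cofork.ofπ (c ≫ p)
      (show (f₁ ≫ g'₁) ≫ (c ≫ p) = (f₂ ≫ g'₂) ≫ (c ≫ p) by
        have e1 : (f₁ ≫ g'₁) ≫ (c ≫ p) = (f₁ ≫ g'₂) ≫ (c ≫ p) := by
          rw [Category.assoc, Category.assoc, hpo.w, reassoc_of% wc']
        have e3 : (f'₂ ≫ g₁) ≫ (c ≫ p) = (f'₂ ≫ g₂) ≫ (c ≫ p) := by
          rw [Category.assoc, Category.assoc, reassoc_of% wc]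
        rw [e1, ← w₁₂, e3, w₂₂]))) := by
  refine ⟨isColimitCoforkCompOfIsPushout hc hc' hpo (fun x hx => ?_) (fun x hx => ?_) _⟩
  · refine eq_of_comp_eq_of_common_section hs'₁ hs'₂ ?_
    rw [reassoc_of% w₁₁, reassoc_of% w₂₂]
    simpa only [Category.assoc] using hx
  · exact eq_of_comp_eq_of_common_section hs₁ hs₂ (by simpa only [Category.assoc] using hx)
end
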